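/- Let α > 1, A ≥ 0, B ≥ 0 and set γ = α/(α−1). On S = (0,1] with Lebesgue measure, define for measurable f : (0,1] → [0,1] the function S_κ(f)(x) = 2A x^{−1/α} ∫₀¹ y^{−1/α} f(y) dy + 3B x^{−1/α} ∫₀¹∫₀¹ y^{−1/α} z^{−1/α} (f(y) + f(z) − f(y)f(z)) dy dz. Then a measurable f : (0,1] → [0,1] satisfies f(x) = 1 − e^{−S_κ(f)(x)} for every x ∈ (0,1] if and only if there exists C ≥ 0 satisfying C = ∫₀¹ x^{−1/α} (1 − exp(−((2A + 6Bγ)C − 3BC²) x^{−1/α})) dx such that f(x) = 1 − exp(−((2A + 6Bγ)C − 3BC²) x^{−1/α}) for every x ∈ (0,1]; in that case C = ∫₀¹ x^{−1/α} f(x) dx. -/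
import Mathlib


open MeasureTheory Real Set

/-- The nonlinear operator `S_κ` for the hyperkernel of Section 9 of the paper, built from
`κ₂(x,y) = A x^{-1/α} y^{-1/α}` (edges) and `κ₃(x,y,z) = B x^{-1/α} y^{-1/α} z^{-1/α}`
(triangles) on `(0,1]` with Lebesgue measure. -/
noncomputable def SKpl (α A B : ℝ) (f : ℝ → ℝ) (x : ℝ) : ℝ :=
  2 * A * x ^ (-1 / α) * (∫ y in Ioc (0 : ℝ) 1, y ^ (-1 / α) * f y) +
    3 * B * x ^ (-1 / α) *
      ∫ y in Ioc (0 : ℝ) 1, ∫ z in Ioc (0 : ℝ) 1,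
        y ^ (-1 / α) * z ^ (-1 / α) * (f y + f z - f y * f z)

section Aux

variable {α : ℝ} (hα : 1 < α)

lemma gam_pos (hα : 1 < α) : 0 < -1/α + 1 := by
  have h0 : 0 < α := lt_trans one_pos hα
  rw [neg_div]
  have : 1/α < 1 := by rw [div_lt_one h0]; exact hα
  linarith

lemma integrable_g (hα : 1 < α) :
    IntegrableOn (fun y : ℝ => y ^ (-1/α)) (Ioc (0:ℝ) 1) := by
  have h : IntervalIntegrable (fun y : ℝ => y ^ (-1/α)) volume 0 1 :=
    intervalIntegral.intervalIntegrable_rpow' (by have := gam_pos hα; linarith)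
  exact (intervalIntegrable_iff_integrableOn_Ioc_of_le (by norm_num)).mp h

lemma integral_g (hα : 1 < α) :
    (∫ y in Ioc (0:ℝ) 1, y ^ (-1/α)) = α / (α - 1) := by
  have h0 : 0 < α := lt_trans one_pos hα
  rw [← intervalIntegral.integral_of_le (by norm_num : (0:ℝ) ≤ 1)]
  rw [integral_rpow (Or.inl (by have := gam_pos hα; linarith))]
  rw [Real.one_rpow, Real.zero_rpow (ne_of_gt (gam_pos hα))]
  field_simp
  ring

lemma integrable_gf (hα : 1 < α) (f : ℝ → ℝ) (hf : Measurable f)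
    (hf01 : ∀ x ∈ Ioc (0 : ℝ) 1, 0 ≤ f x ∧ f x ≤ 1) :
    IntegrableOn (fun y : ℝ => y ^ (-1/α) * f y) (Ioc (0:ℝ) 1) := by
  apply (integrable_g hα).mono'
  · exact ((by fun_prop : Measurable (fun y : ℝ => y ^ (-1/α) * f y))).aestronglyMeasurable
  · filter_upwards [ae_restrict_mem measurableSet_Ioc] with y hy
    have hg0 : (0:ℝ) ≤ y ^ (-1/α) := Real.rpow_nonneg (le_of_lt hy.1) _
    rw [Real.norm_eq_abs, abs_mul, abs_of_nonneg hg0]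
    calc y ^ (-1/α) * |f y| ≤ y ^ (-1/α) * 1 := by
          apply mul_le_mul_of_nonneg_left _ hg0
          rw [abs_le]; exact ⟨by linarith [(hf01 y hy).1], (hf01 y hy).2⟩
      _ = y ^ (-1/α) := mul_one _

lemma skpl_eq (α A B : ℝ) (hα : 1 < α) (f : ℝ → ℝ) (hf : Measurable f)
    (hf01 : ∀ x ∈ Ioc (0 : ℝ) 1, 0 ≤ f x ∧ f x ≤ 1) (x : ℝ) :
    SKpl α A B f x =
      ((2 * A + 6 * B * (α / (α - 1))) * (∫ y in Ioc (0:ℝ) 1, y ^ (-1/α) * f y)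
        - 3 * B * (∫ y in Ioc (0:ℝ) 1, y ^ (-1/α) * f y) ^ 2) * x ^ (-1/α) := by
  set γ : ℝ := α / (α - 1) with hγ
  set C : ℝ := ∫ y in Ioc (0:ℝ) 1, y ^ (-1/α) * f y with hC
  have hg := integrable_g hα
  have hgf := integrable_gf hα f hf hf01
  have inner : ∀ y : ℝ,
      (∫ z in Ioc (0:ℝ) 1, y ^ (-1/α) * z ^ (-1/α) * (f y + f z - f y * f z))
        = (y ^ (-1/α) * f y) * γ + (y ^ (-1/α) * (1 - f y)) * C := by
    intro y
    have : (∫ z in Ioc (0:ℝ) 1, y ^ (-1/α) * z ^ (-1/α) * (f y + f z - f y * f z))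
        = ∫ z in Ioc (0:ℝ) 1,
            ((y ^ (-1/α) * f y) * z ^ (-1/α)
              + (y ^ (-1/α) * (1 - f y)) * (z ^ (-1/α) * f z)) := by
      apply setIntegral_congr_fun measurableSet_Ioc
      intro z _
      simp only
      ring
    rw [this, integral_add (hg.const_mul _) (hgf.const_mul _),
      integral_const_mul, integral_const_mul, integral_g hα, ← hC]
  have douter :
      (∫ y in Ioc (0:ℝ) 1, ∫ z in Ioc (0:ℝ) 1,
          y ^ (-1/α) * z ^ (-1/α) * (f y + f z - f y * f z))
        = 2 * γ * C - C ^ 2 := by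
    have h1 : (∫ y in Ioc (0:ℝ) 1, ∫ z in Ioc (0:ℝ) 1,
          y ^ (-1/α) * z ^ (-1/α) * (f y + f z - f y * f z))
        = ∫ y in Ioc (0:ℝ) 1,
            ((γ - C) * (y ^ (-1/α) * f y) + C * y ^ (-1/α)) := by
      apply setIntegral_congr_fun measurableSet_Ioc
      intro y _
      simp only
      rw [inner y]
      ring
    rw [h1, integral_add (hgf.const_mul _) (hg.const_mul _),
      integral_const_mul, integral_const_mul, integral_g hα, ← hC]
    ring
  rw [SKpl, douter, ← hC]
  ring

end Aux

/-- Section 9.2 of the paper.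
A measurable `f : (0,1] → [0,1]` satisfies `f = 1 − e^{−S_κ(f)}` if and only if it has the
form `f(x) = 1 − exp(−((2A + 6Bγ)C − 3BC²) x^{−1/α})` for some `C ≥ 0` solving the scalar
equation `(9.6)`; in that case `C = ∫₀¹ x^{−1/α} f(x) dx`. Here `γ = α/(α−1)`. -/
theorem stmt16 (α A B : ℝ) (hα : 1 < α) (hA : 0 ≤ A) (hB : 0 ≤ B)
    (f : ℝ → ℝ) (hf : Measurable f)
    (hf01 : ∀ x ∈ Ioc (0 : ℝ) 1, 0 ≤ f x ∧ f x ≤ 1) :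
    (∀ x ∈ Ioc (0 : ℝ) 1, f x = 1 - Real.exp (-(SKpl α A B f x))) ↔
    ∃ C : ℝ, 0 ≤ C ∧
      C = (∫ x in Ioc (0 : ℝ) 1, x ^ (-1 / α) *
        (1 - Real.exp (-((2 * A + 6 * B * (α / (α - 1))) * C - 3 * B * C ^ 2) *
          x ^ (-1 / α)))) ∧
      (∀ x ∈ Ioc (0 : ℝ) 1, f x =
        1 - Real.exp (-((2 * A + 6 * B * (α / (α - 1))) * C - 3 * B * C ^ 2) *
          x ^ (-1 / α))) ∧
      C = ∫ x in Ioc (0 : ℝ) 1, x ^ (-1 / α) * f x := by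
  constructor
  · intro hfix
    set C : ℝ := ∫ y in Ioc (0:ℝ) 1, y ^ (-1/α) * f y with hC
    refine ⟨C, ?_, ?_, ?_, rfl⟩
    · apply setIntegral_nonneg measurableSet_Ioc
      intro y hy
      exact mul_nonneg (Real.rpow_nonneg (le_of_lt hy.1) _) (hf01 y hy).1
    · have hform : ∀ x ∈ Ioc (0 : ℝ) 1, f x =
          1 - Real.exp (-((2 * A + 6 * B * (α / (α - 1))) * C - 3 * B * C ^ 2) *
            x ^ (-1 / α)) := by
        intro x hx
        rw [hfix x hx, skpl_eq α A B hα f hf hf01 x, ← hC, neg_mul]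
      rw [hC]
      apply setIntegral_congr_fun measurableSet_Ioc
      intro y hy
      simp only
      rw [hform y hy, ← hC]
    · intro x hx
      rw [hfix x hx, skpl_eq α A B hα f hf hf01 x, ← hC, neg_mul]
  · rintro ⟨C, hC0, hCeq, hform, hCint⟩
    intro x hx
    rw [skpl_eq α A B hα f hf hf01 x, ← hCint, ← neg_mul]
    exact hform x hx
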